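/- Let (D,F) be a valid pair that is loose, i.e. valid but not tight. Then D is F-dicolourable. -/

import Mathlib

open scoped Classical

/-- A finite digraph with vertex set a `Finset ℕ` and no loops.
Both arcs `(u,v)` and `(v,u)` may be present (a digon). -/
structure Digraph' where
  verts : Finset ℕ
  arcs : Finset (ℕ × ℕ)
  mem_fst : ∀ a ∈ arcs, a.1 ∈ verts
  mem_snd : ∀ a ∈ arcs, a.2 ∈ verts
  no_loops : ∀ a ∈ arcs, a.1 ≠ a.2

namespace Digraph'

/-- In-degree of `v`. -/
def inDeg (D : Digraph') (v : ℕ) : ℕ := (D.arcs.filter fun a => a.2 = v).card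

/-- Out-degree of `v`. -/
def outDeg (D : Digraph') (v : ℕ) : ℕ := (D.arcs.filter fun a => a.1 = v).card

/-- In-neighbourhood of `v`. -/
def inNbrs (D : Digraph') (v : ℕ) : Finset ℕ := (D.arcs.filter fun a => a.2 = v).image Prod.fst

/-- Out-neighbourhood of `v`. -/
def outNbrs (D : Digraph') (v : ℕ) : Finset ℕ := (D.arcs.filter fun a => a.1 = v).image Prod.snd

/-- Neighbourhood of `v` in the underlying graph. -/
def ugNbrs (D : Digraph') (v : ℕ) : Finset ℕ := D.inNbrs v ∪ D.outNbrs v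

/-- `H` is a subdigraph of `D`. -/
def IsSubdigraph (H D : Digraph') : Prop := H.verts ⊆ D.verts ∧ H.arcs ⊆ D.arcs

/-- The subdigraph of `D` induced by the vertex set `X`. -/
def induce (D : Digraph') (X : Finset ℕ) : Digraph' where
  verts := D.verts ∩ X
  arcs := D.arcs.filter fun a => a.1 ∈ X ∧ a.2 ∈ X
  mem_fst := fun a ha => by
    simp only [Finset.mem_filter] at ha
    exact Finset.mem_inter.mpr ⟨D.mem_fst a ha.1, ha.2.1⟩
  mem_snd := fun a ha => by
    simp only [Finset.mem_filter] at ha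
    exact Finset.mem_inter.mpr ⟨D.mem_snd a ha.1, ha.2.2⟩
  no_loops := fun a ha => by
    simp only [Finset.mem_filter] at ha
    exact D.no_loops a ha.1

/-- `D − X`, the digraph obtained from `D` by deleting the vertices of `X`. -/
def del (D : Digraph') (X : Finset ℕ) : Digraph' := D.induce (D.verts \ X)

/-- Adjacency in the underlying graph of `D`. -/
def ugAdj (D : Digraph') (u v : ℕ) : Prop :=
  u ∈ D.verts ∧ v ∈ D.verts ∧ ((u, v) ∈ D.arcs ∨ (v, u) ∈ D.arcs)

/-- `D` is connected, i.e. its underlying graph is connected. -/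
def Connected (D : Digraph') : Prop :=
  D.verts.Nonempty ∧ ∀ u ∈ D.verts, ∀ v ∈ D.verts, Relation.ReflTransGen D.ugAdj u v

/-- `D` is biconnected: it has at least two vertices, is connected, and stays
connected after the deletion of any vertex. -/
def Biconnected (D : Digraph') : Prop :=
  2 ≤ D.verts.card ∧ D.Connected ∧ ∀ x ∈ D.verts, (D.del {x}).Connected

/-- Every arc of `D` lies in a digon. -/
def Bidirected (D : Digraph') : Prop := ∀ a ∈ D.arcs, (a.2, a.1) ∈ D.arcs

/-- The underlying graph of `D` is a cycle. -/
def IsCycleUG (D : Digraph') : Prop :=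
  D.Connected ∧ ∀ v ∈ D.verts, (D.ugNbrs v).card = 2

/-- `D` is a bidirected odd cycle. -/
def BidirectedOddCycle (D : Digraph') : Prop :=
  D.Bidirected ∧ D.IsCycleUG ∧ Odd D.verts.card

/-- `D` is a bidirected complete graph. -/
def BidirectedComplete (D : Digraph') : Prop :=
  ∀ u ∈ D.verts, ∀ v ∈ D.verts, u ≠ v → (u, v) ∈ D.arcs

/-- `D` is strictly-`f`-bidegenerate: every nonempty subdigraph `H` of `D` contains a
vertex `v` with `d⁻_H(v) < f⁻(v)` or `d⁺_H(v) < f⁺(v)`. -/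
def StrictlyBidegenerate (D : Digraph') (f : ℕ → ℕ × ℕ) : Prop :=
  ∀ H : Digraph', H.IsSubdigraph D → H.verts.Nonempty →
    ∃ v ∈ H.verts, H.inDeg v < (f v).1 ∨ H.outDeg v < (f v).2

/-- `α` is an `F`-dicolouring of `D`: for each colour `i`, the subdigraph induced by the
vertices coloured `i` is strictly-`Fᵢ`-bidegenerate. -/
def IsDicolouring (D : Digraph') (s : ℕ) (F : Fin s → ℕ → ℕ × ℕ) (α : ℕ → Fin s) : Prop :=
  ∀ i : Fin s, (D.induce (D.verts.filter fun v => α v = i)).StrictlyBidegenerate (F i)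

/-- `D` is `F`-dicolourable. -/
def Dicolourable (D : Digraph') (s : ℕ) (F : Fin s → ℕ → ℕ × ℕ) : Prop :=
  ∃ α : ℕ → Fin s, D.IsDicolouring s F α

/-- `(D,F)` is a valid pair: `D` is connected and the colour budget dominates the
in- and out-degrees at every vertex. -/
def ValidPair (D : Digraph') (s : ℕ) (F : Fin s → ℕ → ℕ × ℕ) : Prop :=
  D.Connected ∧ ∀ v ∈ D.verts,
    D.inDeg v ≤ ∑ i, (F i v).1 ∧ D.outDeg v ≤ ∑ i, (F i v).2

/-- `(D,F)` is tight: both budget inequalities are equalities at every vertex. -/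
def Tight (D : Digraph') (s : ℕ) (F : Fin s → ℕ → ℕ × ℕ) : Prop :=
  ∀ v ∈ D.verts, ∑ i, (F i v).1 = D.inDeg v ∧ ∑ i, (F i v).2 = D.outDeg v

/-- Hard pairs, defined inductively: monochromatic, bicycle, complete, and join hard pairs. -/
inductive IsHardPair : (s : ℕ) → Digraph' → (Fin s → ℕ → ℕ × ℕ) → Prop
  | mono {s : ℕ} {D : Digraph'} {F : Fin s → ℕ → ℕ × ℕ} (i : Fin s)
      (hbi : D.Biconnected)
      (hi : ∀ v ∈ D.verts, F i v = (D.inDeg v, D.outDeg v))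
      (hk : ∀ k : Fin s, k ≠ i → ∀ v ∈ D.verts, F k v = (0, 0)) :
      IsHardPair s D F
  | bicycle {s : ℕ} {D : Digraph'} {F : Fin s → ℕ → ℕ × ℕ} (i j : Fin s) (hij : i ≠ j)
      (hD : D.BidirectedOddCycle)
      (hi : ∀ v ∈ D.verts, F i v = (1, 1))
      (hj : ∀ v ∈ D.verts, F j v = (1, 1))
      (hk : ∀ k : Fin s, k ≠ i → k ≠ j → ∀ v ∈ D.verts, F k v = (0, 0)) :
      IsHardPair s D F
  | complete {s : ℕ} {D : Digraph'} {F : Fin s → ℕ → ℕ × ℕ}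
      (hD : D.BidirectedComplete)
      (hconst : ∀ k : Fin s, ∀ u ∈ D.verts, ∀ v ∈ D.verts, F k u = F k v)
      (hsym : ∀ k : Fin s, ∀ v ∈ D.verts, (F k v).1 = (F k v).2)
      (hsum : ∀ v ∈ D.verts, ∑ k, (F k v).2 = D.verts.card - 1) :
      IsHardPair s D F
  | join {s : ℕ} {D : Digraph'} {F : Fin s → ℕ → ℕ × ℕ}
      (D₁ D₂ : Digraph') (F₁ F₂ : Fin s → ℕ → ℕ × ℕ) (x : ℕ)
      (h₁ : IsHardPair s D₁ F₁) (h₂ : IsHardPair s D₂ F₂)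
      (hx : D₁.verts ∩ D₂.verts = {x})
      (hV : D.verts = D₁.verts ∪ D₂.verts)
      (hA : D.arcs = D₁.arcs ∪ D₂.arcs)
      (hF₁ : ∀ k : Fin s, ∀ v ∈ D₁.verts, v ≠ x → F k v = F₁ k v)
      (hF₂ : ∀ k : Fin s, ∀ v ∈ D₂.verts, v ≠ x → F k v = F₂ k v)
      (hFx : ∀ k : Fin s, F k x = ((F₁ k x).1 + (F₂ k x).1, (F₁ k x).2 + (F₂ k x).2)) :
      IsHardPair s D F

/-- The sequence of functions of the pair reduced from `(D,F)` by a colouring `α` of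
`X ⊆ V(D)`: the budget of colour `i` at `u` decreases by the number of in- and out-neighbours
of `u` inside `X` coloured `i` (truncated at `0`). -/
def reduceF (D : Digraph') {s : ℕ} (F : Fin s → ℕ → ℕ × ℕ) (X : Finset ℕ) (α : ℕ → Fin s) :
    Fin s → ℕ → ℕ × ℕ :=
  fun i u =>
    ((F i u).1 - ((D.inNbrs u ∩ X).filter fun w => α w = i).card,
     (F i u).2 - ((D.outNbrs u ∩ X).filter fun w => α w = i).card)

/-- `B` is a block of `D`: a maximal biconnected subdigraph. -/
def IsBlock (B D : Digraph') : Prop :=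
  B.IsSubdigraph D ∧ B.Biconnected ∧
    ∀ B' : Digraph', B'.IsSubdigraph D → B'.Biconnected → B.IsSubdigraph B' → B' = B

/-- `x` is a cut-vertex of `D`: `D − x` is disconnected. -/
def CutVertex (D : Digraph') (x : ℕ) : Prop :=
  x ∈ D.verts ∧ (D.del {x}).verts.Nonempty ∧ ¬ (D.del {x}).Connected

/-- `B` is an end-block of `D` whose unique cut-vertex (of `D`) in `B` is `x`. -/
def IsEndBlockAt (B D : Digraph') (x : ℕ) : Prop :=
  IsBlock B D ∧ x ∈ B.verts ∧ D.CutVertex x ∧ ∀ y ∈ B.verts, D.CutVertex y → y = x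

/-- `B` is a monochromatic hard end-block with cut-vertex `x`, for colour `c`. -/
def MonoHardEndBlock {s : ℕ} (F : Fin s → ℕ → ℕ × ℕ) (B : Digraph') (x : ℕ) (c : Fin s) : Prop :=
  B.inDeg x ≤ (F c x).1 ∧ B.outDeg x ≤ (F c x).2 ∧
    ∀ v ∈ B.verts, v ≠ x →
      F c v = (B.inDeg v, B.outDeg v) ∧ ∀ k : Fin s, k ≠ c → F k v = (0, 0)

/-- `B` is a bicycle hard end-block with cut-vertex `x`. -/
def BicycleHardEndBlock {s : ℕ} (F : Fin s → ℕ → ℕ × ℕ) (B : Digraph') (x : ℕ) : Prop :=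
  B.BidirectedOddCycle ∧
    ∃ i j : Fin s, i ≠ j ∧
      1 ≤ (F i x).1 ∧ 1 ≤ (F i x).2 ∧ 1 ≤ (F j x).1 ∧ 1 ≤ (F j x).2 ∧
      ∀ v ∈ B.verts, v ≠ x →
        F i v = (1, 1) ∧ F j v = (1, 1) ∧ ∀ k : Fin s, k ≠ i → k ≠ j → F k v = (0, 0)

/-- `B` is a complete hard end-block with cut-vertex `x`. -/
def CompleteHardEndBlock {s : ℕ} (F : Fin s → ℕ → ℕ × ℕ) (B : Digraph') (x : ℕ) : Prop :=
  B.BidirectedComplete ∧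
    (∀ k : Fin s, ∀ u ∈ B.verts, u ≠ x → ∀ v ∈ B.verts, v ≠ x → F k u = F k v) ∧
    (∀ k : Fin s, ∀ v ∈ B.verts, v ≠ x → (F k v).1 = (F k v).2) ∧
    (∀ k : Fin s, ∀ u ∈ B.verts, u ≠ x → (F k u).1 ≤ (F k x).1 ∧ (F k u).2 ≤ (F k x).2)

/-- `B` is a hard end-block with cut-vertex `x`. -/
def HardEndBlock {s : ℕ} (F : Fin s → ℕ → ℕ × ℕ) (B : Digraph') (x : ℕ) : Prop :=
  (∃ c : Fin s, MonoHardEndBlock F B x c) ∨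
    BicycleHardEndBlock F B x ∨ CompleteHardEndBlock F B x

/-- `(D',F')` is the contraction of `(D,F)` with respect to the hard end-block `B` with
cut-vertex `x`, where `u` is a vertex of `B` other than `x`. -/
def IsContraction (D : Digraph') {s : ℕ} (F : Fin s → ℕ → ℕ × ℕ) (B : Digraph') (x u : ℕ)
    (D' : Digraph') (F' : Fin s → ℕ → ℕ × ℕ) : Prop :=
  D' = D.del (B.verts \ {x}) ∧
  (∀ k : Fin s, ∀ v ∈ D'.verts, v ≠ x → F' k v = F k v) ∧
  ((∃ c : Fin s, MonoHardEndBlock F B x c ∧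
      F' c x = ((F c x).1 - B.inDeg x, (F c x).2 - B.outDeg x) ∧
      ∀ k : Fin s, k ≠ c → F' k x = F k x) ∨
   ((¬ ∃ c : Fin s, MonoHardEndBlock F B x c) ∧
      ∀ k : Fin s, F' k x = ((F k x).1 - (F k u).1, (F k x).2 - (F k u).2)))

/-- Property (E): all the functions exceed `1` in the relevant coordinate at every vertex
having an in-(resp. out-)neighbour. -/
def PropE (D : Digraph') {s : ℕ} (F : Fin s → ℕ → ℕ × ℕ) : Prop :=
  ∀ x ∈ D.verts, ∀ c : Fin s,
    (0 < D.inDeg x → 1 ≤ (F c x).1) ∧ (0 < D.outDeg x → 1 ≤ (F c x).2)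

/-- `C` is a directed cycle: connected, and every vertex has in- and out-degree one. -/
def IsDirectedCycle (C : Digraph') : Prop :=
  C.Connected ∧ ∀ v ∈ C.verts, C.inDeg v = 1 ∧ C.outDeg v = 1

/-- `D` is acyclic: it contains no directed cycle. -/
def AcyclicD (D : Digraph') : Prop :=
  ¬ ∃ C : Digraph', C.IsSubdigraph D ∧ C.IsDirectedCycle

/-- `α` is a `k`-dicolouring of `D`: every colour class induces an acyclic subdigraph. -/
def IsKDicolouring (D : Digraph') (k : ℕ) (α : ℕ → Fin k) : Prop :=
  ∀ i : Fin k, AcyclicD (D.induce (D.verts.filter fun v => α v = i))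

/-- The dichromatic number of `D`. -/
noncomputable def dichromatic (D : Digraph') : ℕ :=
  sInf {k : ℕ | ∃ α : ℕ → Fin k, D.IsKDicolouring k α}

end Digraph'

open Digraph'

/-!
A vertex `v` is slack in a vertex set `T` if it has fewer in-neighbours in `T` than its total
in-budget `∑ᵢ fᵢ⁻(v)`, or fewer out-neighbours in `T` than `∑ᵢ fᵢ⁺(v)`. Looseness gives a vertex `u`
slack in every `T`; if `u ∉ T`, connectivity gives a vertex of `T` with a neighbour outside `T`,
which validity makes slack in `T`. Hence `D` can be coloured greedily, peeling off a slack vertex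
at a time: by pigeonhole a vertex slack in `T` has a colour `c` in which it has fewer `c`-coloured
in- or out-neighbours in `T` than `f_c` allows. In the resulting colouring every nonempty `T` has
a vertex `v` of some colour `c` with fewer `c`-coloured in- or out-neighbours in `T` than `f_c(v)`,
which is the strict `f_c`-bidegeneracy of the colour classes.
-/

open Finset

theorem Relation.ReflTransGen.exists_step_leaving {α : Type*} {r : α → α → Prop}
    {p : α → Prop} {a b : α} (h : Relation.ReflTransGen r a b) (ha : p a) (hb : ¬ p b) :
    ∃ x y, r x y ∧ p x ∧ ¬ p y := by
  induction h with
  | refl => exact absurd ha hb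
  | @tail c d _ hcd ih =>
    by_cases hc : p c
    · exact ⟨c, d, hcd, hc, hb⟩
    · exact ih hc

namespace Digraph'

variable {D : Digraph'} {s : ℕ} {F : Fin s → ℕ → ℕ × ℕ}

@[simp]
lemma mem_inNbrs {v w : ℕ} : w ∈ D.inNbrs v ↔ (w, v) ∈ D.arcs := by
  simp [inNbrs]

@[simp]
lemma mem_outNbrs {v w : ℕ} : w ∈ D.outNbrs v ↔ (v, w) ∈ D.arcs := by
  simp [outNbrs]

lemma inDeg_eq_card_inNbrs (v : ℕ) : D.inDeg v = (D.inNbrs v).card := by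
  refine (card_image_of_injOn fun a ha b hb hab => ?_).symm
  simp only [mem_coe, mem_filter] at ha hb
  exact Prod.ext hab (ha.2.trans hb.2.symm)

lemma outDeg_eq_card_outNbrs (v : ℕ) : D.outDeg v = (D.outNbrs v).card := by
  refine (card_image_of_injOn fun a ha b hb hab => ?_).symm
  simp only [mem_coe, mem_filter] at ha hb
  exact Prod.ext (ha.2.trans hb.2.symm) hab

lemma IsSubdigraph.inDeg_le {H : Digraph'} (h : H.IsSubdigraph D) (v : ℕ) :
    H.inDeg v ≤ (D.inNbrs v ∩ H.verts).card := by
  rw [inDeg_eq_card_inNbrs]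
  refine card_le_card fun w hw => ?_
  rw [mem_inNbrs] at hw
  exact mem_inter.2 ⟨mem_inNbrs.2 (h.2 hw), H.mem_fst _ hw⟩

lemma IsSubdigraph.outDeg_le {H : Digraph'} (h : H.IsSubdigraph D) (v : ℕ) :
    H.outDeg v ≤ (D.outNbrs v ∩ H.verts).card := by
  rw [outDeg_eq_card_outNbrs]
  refine card_le_card fun w hw => ?_
  rw [mem_outNbrs] at hw
  exact mem_inter.2 ⟨mem_outNbrs.2 (h.2 hw), H.mem_snd _ hw⟩

lemma Connected.exists_ugAdj_of_mem_of_notMem (hD : D.Connected) {T : Finset ℕ} {t u : ℕ}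
    (ht : t ∈ T) (htD : t ∈ D.verts) (hu : u ∈ D.verts) (huT : u ∉ T) :
    ∃ v ∈ T, ∃ x ∉ T, D.ugAdj v x := by
  obtain ⟨v, x, hvx, hv, hx⟩ := (hD.2 t htD u hu).exists_step_leaving (p := (· ∈ T)) ht huT
  exact ⟨v, hv, x, hx, hvx⟩

def HasSlack (D : Digraph') (F : Fin s → ℕ → ℕ × ℕ) (T : Finset ℕ) (v : ℕ) : Prop :=
  (D.inNbrs v ∩ T).card < ∑ i, (F i v).1 ∨ (D.outNbrs v ∩ T).card < ∑ i, (F i v).2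

lemma hasSlack_of_lt {v : ℕ} (hv : D.inDeg v < ∑ i, (F i v).1 ∨ D.outDeg v < ∑ i, (F i v).2)
    (T : Finset ℕ) : D.HasSlack F T v := by
  rw [inDeg_eq_card_inNbrs, outDeg_eq_card_outNbrs] at hv
  exact hv.imp (lt_of_le_of_lt (card_le_card inter_subset_left))
    (lt_of_le_of_lt (card_le_card inter_subset_left))

lemma hasSlack_of_ugAdj {T : Finset ℕ} {v x : ℕ}
    (hv : D.inDeg v ≤ ∑ i, (F i v).1 ∧ D.outDeg v ≤ ∑ i, (F i v).2) (hvx : D.ugAdj v x)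
    (hx : x ∉ T) : D.HasSlack F T v := by
  have missing : ∀ N : Finset ℕ, x ∈ N → (N ∩ T).card < N.card := fun N hxN =>
    card_lt_card <| (ssubset_iff_of_subset inter_subset_left).2
      ⟨x, hxN, fun h => hx (mem_inter.1 h).2⟩
  rw [inDeg_eq_card_inNbrs, outDeg_eq_card_outNbrs] at hv
  rcases hvx.2.2 with hout | hin
  · exact Or.inr ((missing _ (mem_outNbrs.2 hout)).trans_le hv.2)
  · exact Or.inl ((missing _ (mem_inNbrs.2 hin)).trans_le hv.1)

lemma ValidPair.exists_lt_of_not_tight (hvalid : D.ValidPair s F) (hloose : ¬ D.Tight s F) :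
    ∃ u ∈ D.verts, D.inDeg u < ∑ i, (F i u).1 ∨ D.outDeg u < ∑ i, (F i u).2 := by
  contrapose! hloose
  intro v hv
  have := hvalid.2 v hv
  have := hloose v hv
  omega

lemma ValidPair.exists_hasSlack (hvalid : D.ValidPair s F) {u : ℕ} (hu : u ∈ D.verts)
    (hslack : D.inDeg u < ∑ i, (F i u).1 ∨ D.outDeg u < ∑ i, (F i u).2) {T : Finset ℕ}
    (hT : T ⊆ D.verts) (hne : T.Nonempty) : ∃ v ∈ T, D.HasSlack F T v := by
  by_cases huT : u ∈ T
  · exact ⟨u, huT, hasSlack_of_lt hslack T⟩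
  obtain ⟨t, ht⟩ := hne
  obtain ⟨v, hv, x, hx, hvx⟩ := hvalid.1.exists_ugAdj_of_mem_of_notMem ht (hT ht) hu huT
  exact ⟨v, hv, hasSlack_of_ugAdj (hvalid.2 v (hT hv)) hvx hx⟩

def FitsColour (D : Digraph') (F : Fin s → ℕ → ℕ × ℕ) (α : ℕ → Fin s) (T : Finset ℕ) (v : ℕ)
    (c : Fin s) : Prop :=
  ((D.inNbrs v ∩ T).filter (α · = c)).card < (F c v).1 ∨
    ((D.outNbrs v ∩ T).filter (α · = c)).card < (F c v).2

def IsDegenerateColouringOn (D : Digraph') (F : Fin s → ℕ → ℕ × ℕ) (α : ℕ → Fin s)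
    (S : Finset ℕ) : Prop :=
  ∀ T ⊆ S, T.Nonempty → ∃ v ∈ T, D.FitsColour F α T v (α v)

lemma FitsColour.mono {α α' : ℕ → Fin s} {T T' : Finset ℕ} {v : ℕ} {c : Fin s}
    (h : D.FitsColour F α T v c)
    (hT : ∀ x ∈ T', x ≠ v → α' x = c → x ∈ T ∧ α x = c) : D.FitsColour F α' T' v c := by
  have key : ∀ N : Finset ℕ, v ∉ N → (N ∩ T').filter (α' · = c) ⊆ (N ∩ T).filter (α · = c) := by
    intro N hvN x hx
    simp only [mem_filter, mem_inter] at hx ⊢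
    obtain ⟨hxT, hxc⟩ := hT x hx.1.2 (ne_of_mem_of_not_mem hx.1.1 hvN) hx.2
    exact ⟨⟨hx.1.1, hxT⟩, hxc⟩
  have hin : v ∉ D.inNbrs v := fun hv => D.no_loops _ (mem_inNbrs.1 hv) rfl
  have hout : v ∉ D.outNbrs v := fun hv => D.no_loops _ (mem_outNbrs.1 hv) rfl
  exact h.imp (lt_of_le_of_lt (card_le_card (key _ hin)))
    (lt_of_le_of_lt (card_le_card (key _ hout)))

lemma HasSlack.exists_fitsColour {T : Finset ℕ} {v : ℕ} (h : D.HasSlack F T v)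
    (α : ℕ → Fin s) : ∃ c, D.FitsColour F α T v c := by
  have fibres : ∀ N : Finset ℕ, N.card = ∑ c, (N.filter (α · = c)).card := fun N =>
    card_eq_sum_card_fiberwise fun _ _ => mem_univ _
  rcases h with h | h
  · rw [fibres] at h
    obtain ⟨c, -, hc⟩ := exists_lt_of_sum_lt h
    exact ⟨c, Or.inl hc⟩
  · rw [fibres] at h
    obtain ⟨c, -, hc⟩ := exists_lt_of_sum_lt h
    exact ⟨c, Or.inr hc⟩

lemma exists_isDegenerateColouringOn [NeZero s] (S : Finset ℕ)
    (hS : ∀ T ⊆ S, T.Nonempty → ∃ v ∈ T, D.HasSlack F T v) :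
    ∃ α, D.IsDegenerateColouringOn F α S := by
  induction S using Finset.strongInduction with
  | H S ih =>
    rcases S.eq_empty_or_nonempty with rfl | hne
    · exact ⟨0, fun T hT hTne => absurd (subset_empty.1 hT) hTne.ne_empty⟩
    obtain ⟨w, hwS, hw⟩ := hS S subset_rfl hne
    obtain ⟨α, hα⟩ := ih (S.erase w) (erase_ssubset hwS) fun T hT =>
      hS T (hT.trans (erase_subset _ _))
    obtain ⟨c, hc⟩ := hw.exists_fitsColour α
    refine ⟨Function.update α w c, fun T hT hTne => ?_⟩
    by_cases hwT : w ∈ T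
    · refine ⟨w, hwT, ?_⟩
      rw [Function.update_self]
      refine hc.mono fun x hxT hxw hxc => ?_
      rw [Function.update_of_ne hxw] at hxc
      exact ⟨hT hxT, hxc⟩
    · have hTw : T ⊆ S.erase w := fun x hx => mem_erase.2 ⟨ne_of_mem_of_not_mem hx hwT, hT hx⟩
      obtain ⟨v, hvT, hv⟩ := hα T hTw hTne
      refine ⟨v, hvT, ?_⟩
      rw [Function.update_of_ne (ne_of_mem_of_not_mem hvT hwT)]
      refine hv.mono fun x hxT _ hxc => ?_
      rw [Function.update_of_ne (ne_of_mem_of_not_mem hxT hwT)] at hxc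
      exact ⟨hxT, hxc⟩

lemma IsDegenerateColouringOn.isDicolouring {α : ℕ → Fin s}
    (h : D.IsDegenerateColouringOn F α D.verts) : D.IsDicolouring s F α := by
  intro i H hH hHne
  have hcol : ∀ x ∈ H.verts, x ∈ D.verts ∧ α x = i := fun x hx => by
    simpa [induce] using hH.1 hx
  have hHD : H.IsSubdigraph D :=
    ⟨fun x hx => (hcol x hx).1, hH.2.trans (filter_subset _ _)⟩
  obtain ⟨v, hv, hfit⟩ := h H.verts (fun x hx => (hcol x hx).1) hHne
  have hclass : ∀ N : Finset ℕ, (N ∩ H.verts).filter (α · = α v) = N ∩ H.verts := fun N =>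
    filter_true_of_mem fun x hx => ((hcol x (mem_inter.1 hx).2).2).trans (hcol v hv).2.symm
  rw [FitsColour, hclass, hclass, (hcol v hv).2] at hfit
  exact ⟨v, hv, hfit.imp (lt_of_le_of_lt (hHD.inDeg_le v)) (lt_of_le_of_lt (hHD.outDeg_le v))⟩

end Digraph'

/-- **Lemma (loose instances).** Let `(D,F)` be a valid pair that is loose
(valid but not tight). Then `D` is `F`-dicolourable. -/
theorem loose_pair_dicolourable
    (D : Digraph') (s : ℕ) (F : Fin s → ℕ → ℕ × ℕ)
    (hvalid : D.ValidPair s F) (hloose : ¬ D.Tight s F) :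
    D.Dicolourable s F := by
  obtain ⟨u, hu, hslack⟩ := hvalid.exists_lt_of_not_tight hloose
  have : NeZero s := ⟨by rintro rfl; simp at hslack⟩
  obtain ⟨α, hα⟩ := exists_isDegenerateColouringOn D.verts fun T hT hne =>
    hvalid.exists_hasSlack hu hslack hT hne
  exact ⟨α, hα.isDicolouring⟩
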